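/- For every γ ∈ (0,1) with γ < a + b*γ + a*γ^2, the functions F1 and F2 are differentiable at γ and F1'(γ) > F2'(γ). -/

import Mathlib

/-- `F1(γ) = (b γ + 2 a γ²) (-log γ)`. -/
noncomputable def F1 (a b γ : ℝ) : ℝ := (b * γ + 2 * a * γ ^ 2) * (-Real.log γ)

/-- `F2(γ) = (a + b γ + a γ²) (-log(a + b γ + a γ²))`. -/
noncomputable def F2 (a b γ : ℝ) : ℝ :=
  (a + b * γ + a * γ ^ 2) * (-Real.log (a + b * γ + a * γ ^ 2))

/-!
With `P = a + b γ + a γ²` one finds `F1' = (b + 4aγ)(-log γ) - (b + 2aγ)` and, since `F2` is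
`negMulLog ∘ P` with `P' = b + 2aγ`, `F2' = (b + 2aγ)(-log P - 1)`. Hence
`F1' - F2' = (b + 2aγ)(log P - log γ) + 2aγ (-log γ)`, where the first term is positive
because `γ < P` and the second is nonnegative because `γ < 1`.
-/

open Real

theorem hasDerivAt_F1 (a b : ℝ) {γ : ℝ} (hγ : γ ≠ 0) :
    HasDerivAt (F1 a b) ((b + 4 * a * γ) * (-log γ) - (b + 2 * a * γ)) γ := by
  have hq : HasDerivAt (fun x => b * x + 2 * a * x ^ 2) (b + 4 * a * γ) γ :=
    (((hasDerivAt_id' γ).const_mul b).fun_add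
      ((hasDerivAt_pow 2 γ).const_mul (2 * a))).congr_deriv (by ring)
  refine (hq.fun_mul (hasDerivAt_log hγ).fun_neg).congr_deriv ?_
  field_simp
  ring

theorem hasDerivAt_F2 (a b : ℝ) {γ : ℝ} (hP : a + b * γ + a * γ ^ 2 ≠ 0) :
    HasDerivAt (F2 a b) ((b + 2 * a * γ) * (-log (a + b * γ + a * γ ^ 2) - 1)) γ := by
  have hp : HasDerivAt (fun x => a + b * x + a * x ^ 2) (b + 2 * a * γ) γ :=
    ((((hasDerivAt_id' γ).const_mul b).const_add a).fun_add
      ((hasDerivAt_pow 2 γ).const_mul a)).congr_deriv (by ring)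
  have hF2 : F2 a b = negMulLog ∘ fun x => a + b * x + a * x ^ 2 := by
    ext x
    simp only [F2, Function.comp, negMulLog]
    ring
  rw [hF2]
  exact ((hasDerivAt_negMulLog hP).comp γ hp).congr_deriv (by ring)

theorem mul_neg_log_sub_lt {a b γ P : ℝ} (ha : 0 ≤ a) (hc : 0 < b + 2 * a * γ)
    (hγ0 : 0 < γ) (hγ1 : γ ≤ 1) (hγP : γ < P) :
    (b + 2 * a * γ) * (-log P - 1) < (b + 4 * a * γ) * (-log γ) - (b + 2 * a * γ) := by
  have hlog : log γ < log P := log_lt_log hγ0 hγP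
  have hlogγ : log γ ≤ 0 := log_nonpos hγ0.le hγ1
  nlinarith [mul_lt_mul_of_pos_left hlog hc,
    mul_nonneg (mul_nonneg ha hγ0.le) (neg_nonneg.2 hlogγ)]

theorem stmt_3 (a b : ℝ) (ha : 0 < a) (hb : 0 < b) (γ : ℝ) (hγ : γ ∈ Set.Ioo (0 : ℝ) 1)
    (hlt : γ < a + b * γ + a * γ ^ 2) :
    DifferentiableAt ℝ (F1 a b) γ ∧ DifferentiableAt ℝ (F2 a b) γ ∧
      deriv (F2 a b) γ < deriv (F1 a b) γ := by
  obtain ⟨hγ0, hγ1⟩ := hγ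
  have hF1 := hasDerivAt_F1 a b hγ0.ne'
  have hF2 := hasDerivAt_F2 a b (hγ0.trans hlt).ne'
  refine ⟨hF1.differentiableAt, hF2.differentiableAt, ?_⟩
  rw [hF1.deriv, hF2.deriv]
  exact mul_neg_log_sub_lt ha.le (by positivity) hγ0 hγ1.le hlt
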